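/- arXiv:1801.04658 — 6 statements merged into one kernel-verified Lean document; each statement's English description precedes it below -/
import Mathlib

section
/- Let Θ be an open subset of ℝ^k, let {p_θ : θ ∈ Θ} be a family of positive probability mass functions on a nonempty finite set X such that θ ↦ p_θ(x) is smooth for each x, and let λ : Θ → (0,∞) be smooth. Define the denormalized family p̃_θ(x) = p_θ(x)·λ(θ) and the generalized Kullback–Leibler divergence I(p̃_θ‖p̃_{θ'}) = Σ_x p̃_θ(x) log(p̃_θ(x)/p̃_{θ'}(x)) − Σ_x p̃_θ(x) + Σ_x p̃_{θ'}(x). Then for all θ ∈ Θ and all indices i, j, the induced metric g^{(I)}_{i,j}(θ) := −(∂/∂θ_i)(∂/∂θ'_j) I(p̃_θ‖p̃_{θ'}) evaluated at θ' = θ equals λ(θ)·( G^{(e)}(θ)_{i,j} + ∂_i log λ(θ) · ∂_j log λ(θ) ), where G^{(e)}(θ)_{i,j} = Σ_x p_θ(x) ∂_i log p_θ(x) ∂_j log p_θ(x) is the Fisher information matrix. -/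
/-- Partial derivative in the `i`-th coordinate direction. -/
noncomputable def pd {k : ℕ} (i : Fin k) (f : (Fin k → ℝ) → ℝ) (θ : Fin k → ℝ) : ℝ :=
  fderiv ℝ f θ (Pi.single i 1)

/-- Generalized Kullback–Leibler divergence between positive measures on a finite set. -/
noncomputable def KLgen {X : Type*} [Fintype X] (p q : X → ℝ) : ℝ :=
  (∑ x, p x * Real.log (p x / q x)) - ∑ x, p x + ∑ x, q x

lemma pd_eq {k : ℕ} {i : Fin k} {f : (Fin k → ℝ) → ℝ} {θ : Fin k → ℝ}
    {L : (Fin k → ℝ) →L[ℝ] ℝ} (h : HasFDerivAt f L θ) : pd i f θ = L (Pi.single i 1) := by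
  rw [pd, h.fderiv]

/-- the Riemannian metric induced (in the Eguchi sense) by the generalized
KL divergence on the denormalized family `p̃_θ = p_θ · λ(θ)` equals
`λ(θ) · (G^{(e)}(θ)_{i,j} + ∂_i log λ(θ) · ∂_j log λ(θ))`, where `G^{(e)}` is the Fisher
information matrix. -/
theorem stmt_1 {k : ℕ} {X : Type*} [Fintype X] [Nonempty X]
    (Θ : Set (Fin k → ℝ)) (hΘ : IsOpen Θ)
    (p : (Fin k → ℝ) → X → ℝ)
    (hpos : ∀ θ ∈ Θ, ∀ x, 0 < p θ x)
    (hsum : ∀ θ ∈ Θ, (∑ x, p θ x) = 1)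
    (hsmooth : ∀ x, ContDiffOn ℝ (⊤ : ℕ∞) (fun θ => p θ x) Θ)
    (lam : (Fin k → ℝ) → ℝ)
    (hlam : ∀ θ ∈ Θ, 0 < lam θ)
    (hlamsmooth : ContDiffOn ℝ (⊤ : ℕ∞) lam Θ) :
    ∀ θ ∈ Θ, ∀ i j : Fin k,
      -(pd i (fun u =>
          pd j (fun v => KLgen (fun x => p u x * lam u) (fun x => p v x * lam v)) θ) θ)
      = lam θ *
          ((∑ x, p θ x *
              (pd i (fun u => Real.log (p u x)) θ * pd j (fun u => Real.log (p u x)) θ))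
            + pd i (fun u => Real.log (lam u)) θ * pd j (fun u => Real.log (lam u)) θ) := by
  intro θ hθ i j
  have hθnb : Θ ∈ nhds θ := hΘ.mem_nhds hθ
  have hdp : ∀ x, DifferentiableAt ℝ (fun u => p u x) θ := fun x =>
    ((hsmooth x).contDiffAt hθnb).differentiableAt (by simp)
  have hdl : DifferentiableAt ℝ lam θ := (hlamsmooth.contDiffAt hθnb).differentiableAt (by simp)
  set Dl : (Fin k → ℝ) →L[ℝ] ℝ := fderiv ℝ lam θ with hDl
  set Dp : X → (Fin k → ℝ) →L[ℝ] ℝ := fun x => fderiv ℝ (fun u => p u x) θ with hDp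
  have hDpf : ∀ x, HasFDerivAt (fun u => p u x) (Dp x) θ := fun x => (hdp x).hasFDerivAt
  have hDlf : HasFDerivAt lam Dl θ := hdl.hasFDerivAt
  set Dt : X → (Fin k → ℝ) →L[ℝ] ℝ := fun x => p θ x • Dl + lam θ • Dp x with hDt
  have hDtf : ∀ x, HasFDerivAt (fun u => p u x * lam u) (Dt x) θ := fun x =>
    (hDpf x).mul hDlf
  have hP : ∀ x, 0 < p θ x := hpos θ hθ
  have hL : 0 < lam θ := hlam θ hθ
  have hPt : ∀ x, 0 < p θ x * lam θ := fun x => mul_pos (hP x) hL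
  have hev : ∀ᶠ v in nhds θ, ∀ x, 0 < p v x * lam v := by
    rw [Filter.eventually_all]
    intro x
    exact ContinuousAt.eventually_lt continuousAt_const (hDtf x).continuousAt (hPt x)
  -- Step A : the inner derivative
  have hinner : ∀ u, pd j (fun v => KLgen (fun x => p u x * lam u) (fun x => p v x * lam v)) θ
      = ∑ x, (1 - (p u x * lam u) * (p θ x * lam θ)⁻¹) * Dt x (Pi.single j 1) := by
    intro u
    have heq : (fun v => ((∑ x, p u x * lam u * Real.log (p u x * lam u)) - ∑ x, p u x * lam u)
          + ∑ x, (p v x * lam v - (p u x * lam u) * Real.log (p v x * lam v)))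
        =ᶠ[nhds θ] (fun v => KLgen (fun x => p u x * lam u) (fun x => p v x * lam v)) := by
      filter_upwards [hev] with v hv
      have h1 : ∀ x : X, (p u x * lam u) * Real.log ((p u x * lam u) / (p v x * lam v))
          = (p u x * lam u) * Real.log (p u x * lam u)
            - (p u x * lam u) * Real.log (p v x * lam v) := by
        intro x
        rcases eq_or_ne (p u x * lam u) 0 with h | h
        · simp [h]
        · rw [Real.log_div h (ne_of_gt (hv x))]; ring
      simp only [KLgen, h1, Finset.sum_sub_distrib]
      ring
    have hder : HasFDerivAt
        (fun v => ((∑ x, p u x * lam u * Real.log (p u x * lam u)) - ∑ x, p u x * lam u)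
          + ∑ x, (p v x * lam v - (p u x * lam u) * Real.log (p v x * lam v)))
        (∑ x, (Dt x - (p u x * lam u) • ((p θ x * lam θ)⁻¹ • Dt x))) θ := by
      apply HasFDerivAt.const_add
      apply HasFDerivAt.fun_sum
      intro x _
      exact (hDtf x).sub (((hDtf x).log (ne_of_gt (hPt x))).const_mul (p u x * lam u))
    have htot := hder.congr_of_eventuallyEq heq.symm
    rw [pd_eq htot]
    rw [ContinuousLinearMap.sum_apply]
    refine Finset.sum_congr rfl fun x _ => ?_
    simp only [ContinuousLinearMap.sub_apply, ContinuousLinearMap.smul_apply, smul_eq_mul]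
    ring
  -- Step B : the outer derivative
  have hBder : HasFDerivAt
      (fun u => ∑ x, (1 - (p u x * lam u) * (p θ x * lam θ)⁻¹) * Dt x (Pi.single j 1))
      (∑ x, Dt x (Pi.single j 1) • -((p θ x * lam θ)⁻¹ • Dt x)) θ := by
    apply HasFDerivAt.fun_sum
    intro x _
    exact (((hDtf x).mul_const _).const_sub 1).mul_const _
  have hgfun : (fun u =>
      pd j (fun v => KLgen (fun x => p u x * lam u) (fun x => p v x * lam v)) θ)
      = fun u => ∑ x, (1 - (p u x * lam u) * (p θ x * lam θ)⁻¹) * Dt x (Pi.single j 1) :=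
    funext hinner
  rw [hgfun, pd_eq hBder]
  have hLHS : -((∑ x, Dt x (Pi.single j 1) • -((p θ x * lam θ)⁻¹ • Dt x)) (Pi.single i 1))
      = ∑ x, (p θ x * lam θ)⁻¹ * Dt x (Pi.single i 1) * Dt x (Pi.single j 1) := by
    rw [ContinuousLinearMap.sum_apply, ← Finset.sum_neg_distrib]
    refine Finset.sum_congr rfl fun x _ => ?_
    simp only [ContinuousLinearMap.smul_apply, ContinuousLinearMap.neg_apply, smul_eq_mul]
    ring
  rw [hLHS]
  -- Step C : log derivatives and the zero-sum identity
  have hlogp : ∀ (x : X) (i' : Fin k), pd i' (fun u => Real.log (p u x)) θ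
      = (p θ x)⁻¹ * Dp x (Pi.single i' 1) := by
    intro x i'
    rw [pd_eq ((hDpf x).log (ne_of_gt (hP x)))]
    simp [smul_eq_mul]
  have hlogl : ∀ (i' : Fin k), pd i' (fun u => Real.log (lam u)) θ
      = (lam θ)⁻¹ * Dl (Pi.single i' 1) := by
    intro i'
    rw [pd_eq (hDlf.log (ne_of_gt hL))]
    simp [smul_eq_mul]
  have hzero : ∀ i' : Fin k, ∑ x, Dp x (Pi.single i' 1) = 0 := by
    intro i'
    have h1 : HasFDerivAt (fun u => ∑ x, p u x) (∑ x, Dp x) θ :=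
      HasFDerivAt.fun_sum fun x _ => hDpf x
    have h2 : (fun u : Fin k → ℝ => ∑ x, p u x) =ᶠ[nhds θ] fun _ => (1:ℝ) := by
      filter_upwards [hθnb] with v hv
      exact hsum v hv
    have h3 : HasFDerivAt (fun _ : Fin k → ℝ => (1:ℝ)) (∑ x, Dp x) θ :=
      h1.congr_of_eventuallyEq h2.symm
    have h4 := h3.unique (hasFDerivAt_const 1 θ)
    rw [← ContinuousLinearMap.sum_apply, h4]
    rfl
  simp only [hlogp, hlogl]
  have hDt_apply : ∀ (x : X) (v : Fin k → ℝ), Dt x v = p θ x * Dl v + lam θ * Dp x v := by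
    intro x v
    simp [hDt, smul_eq_mul]
  simp only [hDt_apply]
  have expand : ∀ x : X, (p θ x * lam θ)⁻¹ * (p θ x * Dl (Pi.single i 1) + lam θ * Dp x (Pi.single i 1))
        * (p θ x * Dl (Pi.single j 1) + lam θ * Dp x (Pi.single j 1))
      = lam θ * (p θ x * ((p θ x)⁻¹ * Dp x (Pi.single i 1) * ((p θ x)⁻¹ * Dp x (Pi.single j 1))))
        + Dl (Pi.single j 1) * Dp x (Pi.single i 1)
        + Dl (Pi.single i 1) * Dp x (Pi.single j 1)
        + (Dl (Pi.single i 1) * Dl (Pi.single j 1) * (lam θ)⁻¹) * p θ x := by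
    intro x
    have h1 : p θ x ≠ 0 := ne_of_gt (hP x)
    have h2 : lam θ ≠ 0 := ne_of_gt hL
    field_simp
    ring
  simp only [expand]
  rw [Finset.sum_add_distrib, Finset.sum_add_distrib, Finset.sum_add_distrib,
    ← Finset.mul_sum, ← Finset.mul_sum, ← Finset.mul_sum, ← Finset.mul_sum,
    hzero i, hzero j, hsum θ hθ]
  have h2 : lam θ ≠ 0 := ne_of_gt hL
  field_simp
  ring
end

section
/- Let Θ be an open subset of ℝ^k and let D : Θ × Θ → ℝ be a smooth function. Define g_{i,j}(θ) = −(∂/∂θ_i)(∂/∂θ'_j) D(θ,θ')|_{θ'=θ}, the connection coefficients Γ_{ij,k}(θ) = −(∂/∂θ_i)(∂/∂θ_j)(∂/∂θ'_k) D(θ,θ')|_{θ'=θ}, and the dual connection coefficients Γ*_{ij,k}(θ) = −(∂/∂θ_k)(∂/∂θ'_i)(∂/∂θ'_j) D(θ,θ')|_{θ'=θ}. Then for all θ ∈ Θ and all indices i, j, k: ∂_k g_{i,j}(θ) = Γ_{ki,j}(θ) + Γ*_{kj,i}(θ); that is, the connections induced by D and its dual D*(p,q) = D(q,p) form a dualistic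 structure with respect to the induced metric. -/
/-- The Riemannian metric induced by a divergence `D`:
`g_{i,j}(θ) = −(∂/∂θ_i)(∂/∂θ'_j) D(θ,θ')|_{θ'=θ}`. -/
noncomputable def gD {k : ℕ} (D : (Fin k → ℝ) → (Fin k → ℝ) → ℝ)
    (i j : Fin k) (θ : Fin k → ℝ) : ℝ :=
  -(pd i (fun a => pd j (fun b => D a b) θ) θ)

/-- The connection coefficients induced by `D`:
`Γ_{ij,m}(θ) = −(∂/∂θ_i)(∂/∂θ_j)(∂/∂θ'_m) D(θ,θ')|_{θ'=θ}`. -/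
noncomputable def ΓD {k : ℕ} (D : (Fin k → ℝ) → (Fin k → ℝ) → ℝ)
    (i j m : Fin k) (θ : Fin k → ℝ) : ℝ :=
  -(pd i (fun u => pd j (fun w => pd m (fun v => D w v) θ) u) θ)

/-- The dual connection coefficients induced by `D`:
`Γ*_{ij,m}(θ) = −(∂/∂θ_m)(∂/∂θ'_i)(∂/∂θ'_j) D(θ,θ')|_{θ'=θ}`. -/
noncomputable def ΓDstar {k : ℕ} (D : (Fin k → ℝ) → (Fin k → ℝ) → ℝ)
    (i j m : Fin k) (θ : Fin k → ℝ) : ℝ :=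
  -(pd m (fun u => pd i (fun v => pd j (fun w => D u w) v) θ) θ)


open Filter Topology

variable {k : ℕ}

lemma pd_left (F : ((Fin k → ℝ) × (Fin k → ℝ)) → ℝ) (a b : Fin k → ℝ)
    (h : DifferentiableAt ℝ F (a, b)) (i : Fin k) :
    pd i (fun x => F (x, b)) a = fderiv ℝ F (a, b) (Pi.single i 1, 0) := by
  have h1 : HasFDerivAt (fun x : Fin k → ℝ => (x, b))
      ((ContinuousLinearMap.id ℝ _).prod 0) a :=
    HasFDerivAt.prodMk (hasFDerivAt_id a) (hasFDerivAt_const b a)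
  have h2 : HasFDerivAt (fun x => F (x, b))
      ((fderiv ℝ F (a, b)).comp ((ContinuousLinearMap.id ℝ _).prod 0)) a :=
    h.hasFDerivAt.comp a h1
  rw [pd, h2.fderiv]
  rfl

lemma pd_right (F : ((Fin k → ℝ) × (Fin k → ℝ)) → ℝ) (a b : Fin k → ℝ)
    (h : DifferentiableAt ℝ F (a, b)) (j : Fin k) :
    pd j (fun y => F (a, y)) b = fderiv ℝ F (a, b) (0, Pi.single j 1) := by
  have h1 : HasFDerivAt (fun y : Fin k → ℝ => (a, y))
      ((0 : _ →L[ℝ] _).prod (ContinuousLinearMap.id ℝ _)) b :=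
    HasFDerivAt.prodMk (hasFDerivAt_const a b) (hasFDerivAt_id b)
  have h2 : HasFDerivAt (fun y => F (a, y))
      ((fderiv ℝ F (a, b)).comp ((0 : _ →L[ℝ] _).prod (ContinuousLinearMap.id ℝ _))) b :=
    h.hasFDerivAt.comp b h1
  rw [pd, h2.fderiv]
  rfl

lemma pd_diag (F : ((Fin k → ℝ) × (Fin k → ℝ)) → ℝ) (a : Fin k → ℝ)
    (h : DifferentiableAt ℝ F (a, a)) (i : Fin k) :
    pd i (fun x => F (x, x)) a = fderiv ℝ F (a, a) (Pi.single i 1, Pi.single i 1) := by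
  have h1 : HasFDerivAt (fun x : Fin k → ℝ => (x, x))
      ((ContinuousLinearMap.id ℝ _).prod (ContinuousLinearMap.id ℝ _)) a :=
    HasFDerivAt.prodMk (hasFDerivAt_id a) (hasFDerivAt_id a)
  have h2 := HasFDerivAt.comp (f := fun x : Fin k → ℝ => (x, x)) a h.hasFDerivAt h1
  rw [pd, show (fun x : Fin k → ℝ => F (x, x)) = F ∘ (fun x => (x, x)) from rfl, h2.fderiv]
  rfl

lemma sym_second {E : Type*} [NormedAddCommGroup E] [NormedSpace ℝ E]
    (G : E → ℝ) (q : E) (hG : ∀ᶠ p in 𝓝 q, ContDiffAt ℝ (⊤ : ℕ∞) G p) (w w' : E) :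
    fderiv ℝ (fun p => fderiv ℝ G p w) q w' = fderiv ℝ (fun p => fderiv ℝ G p w') q w := by
  have hGq : ContDiffAt ℝ (⊤ : ℕ∞) G q := hG.self_of_nhds
  have h1 : ContDiffAt ℝ 1 (fderiv ℝ G) q := hGq.fderiv_right (WithTop.coe_le_coe.mpr le_top)
  have hdiff : DifferentiableAt ℝ (fderiv ℝ G) q := h1.differentiableAt one_ne_zero
  set f'' := fderiv ℝ (fderiv ℝ G) q with hf''
  have hsym : f'' w' w = f'' w w' := by
    refine second_derivative_symmetric_of_eventually (f := G) ?_ hdiff.hasFDerivAt w' w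
    filter_upwards [hG] with p hp
    exact (hp.differentiableAt (by simp)).hasFDerivAt
  have key : ∀ v : E, fderiv ℝ (fun p => fderiv ℝ G p v) q
      = (ContinuousLinearMap.apply ℝ ℝ v).comp f'' := by
    intro v
    have : HasFDerivAt (fun p => fderiv ℝ G p v)
        ((ContinuousLinearMap.apply ℝ ℝ v).comp f'') q :=
      (ContinuousLinearMap.apply ℝ ℝ v).hasFDerivAt.comp q hdiff.hasFDerivAt
    exact this.fderiv
  rw [key w, key w']
  exact hsym

/-- the connections induced by a smooth divergence `D` and its dual
`D*(p,q) = D(q,p)` form a dualistic structure with respect to the induced metric: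
`∂_k g_{i,j}(θ) = Γ_{ki,j}(θ) + Γ*_{kj,i}(θ)`. -/
theorem stmt_2 {k : ℕ} (Θ : Set (Fin k → ℝ)) (hΘ : IsOpen Θ)
    (D : (Fin k → ℝ) → (Fin k → ℝ) → ℝ)
    (hD : ContDiffOn ℝ (⊤ : ℕ∞) (fun q : (Fin k → ℝ) × (Fin k → ℝ) => D q.1 q.2) (Θ ×ˢ Θ)) :
    ∀ θ ∈ Θ, ∀ i j m : Fin k,
      pd m (fun u => gD D i j u) θ = ΓD D m i j θ + ΓDstar D m j i θ := by
  intro θ hθ i j m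
  have hU : IsOpen (Θ ×ˢ Θ) := hΘ.prod hΘ
  set F : (Fin k → ℝ) × (Fin k → ℝ) → ℝ := fun q => D q.1 q.2 with hFdef
  have hF : ∀ p ∈ Θ ×ˢ Θ, ContDiffAt ℝ (⊤ : ℕ∞) F p := fun p hp => hD.contDiffAt (hU.mem_nhds hp)
  set G : (Fin k → ℝ) × (Fin k → ℝ) → ℝ :=
    fun p => fderiv ℝ F p ((0 : Fin k → ℝ), Pi.single j 1) with hGdef
  have hG : ∀ p ∈ Θ ×ˢ Θ, ContDiffAt ℝ (⊤ : ℕ∞) G p := by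
    intro p hp
    exact ((ContinuousLinearMap.apply ℝ ℝ
      (((0 : Fin k → ℝ), Pi.single j 1))).contDiff.contDiffAt).comp p
      ((hF p hp).fderiv_right (m := ((⊤ : ℕ∞) : WithTop ℕ∞)) (by exact_mod_cast le_top))
  have hGd : ∀ p ∈ Θ ×ˢ Θ, DifferentiableAt ℝ G p :=
    fun p hp => (hG p hp).differentiableAt (by simp)
  have fact1 : ∀ a ∈ Θ, ∀ b ∈ Θ, pd j (fun y => D a y) b = G (a, b) := by
    intro a ha b hb
    exact pd_right F a b ((hF (a, b) ⟨ha, hb⟩).differentiableAt (by simp)) j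
  have fact3 : ∀ c : Fin k, ∀ u ∈ Θ, ∀ t ∈ Θ,
      pd c (fun w => pd j (fun y => D w y) t) u = fderiv ℝ G (u, t) (Pi.single c 1, 0) := by
    intro c u hu t ht
    have hev : (fun w => pd j (fun y => D w y) t) =ᶠ[𝓝 u] (fun w => G (w, t)) := by
      filter_upwards [hΘ.mem_nhds hu] with w hw
      exact fact1 w hw t ht
    rw [pd, hev.fderiv_eq]
    exact pd_left G u t (hGd (u, t) ⟨hu, ht⟩) c
  have fact3' : ∀ c : Fin k, ∀ u ∈ Θ, ∀ t ∈ Θ,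
      pd c (fun y => pd j (fun w => D u w) y) t = fderiv ℝ G (u, t) (0, Pi.single c 1) := by
    intro c u hu t ht
    have hev : (fun y => pd j (fun w => D u w) y) =ᶠ[𝓝 t] (fun y => G (u, y)) := by
      filter_upwards [hΘ.mem_nhds ht] with y hy
      exact fact1 u hu y hy
    rw [pd, hev.fderiv_eq]
    exact pd_right G u t (hGd (u, t) ⟨hu, ht⟩) c
  set G2 : (Fin k → ℝ) × (Fin k → ℝ) → ℝ :=
    fun p => fderiv ℝ G p (Pi.single i 1, (0 : Fin k → ℝ)) with hG2def
  set G2' : (Fin k → ℝ) × (Fin k → ℝ) → ℝ :=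
    fun p => fderiv ℝ G p ((0 : Fin k → ℝ), Pi.single m 1) with hG2'def
  have hG2 : ∀ p ∈ Θ ×ˢ Θ, ContDiffAt ℝ (⊤ : ℕ∞) G2 p := by
    intro p hp
    exact ((ContinuousLinearMap.apply ℝ ℝ
      ((Pi.single i 1, (0 : Fin k → ℝ)))).contDiff.contDiffAt).comp p
      ((hG p hp).fderiv_right (m := ((⊤ : ℕ∞) : WithTop ℕ∞)) (by exact_mod_cast le_top))
  have hG2d : DifferentiableAt ℝ G2 (θ, θ) :=
    (hG2 (θ, θ) ⟨hθ, hθ⟩).differentiableAt (by simp)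
  have hG2' : ∀ p ∈ Θ ×ˢ Θ, ContDiffAt ℝ (⊤ : ℕ∞) G2' p := by
    intro p hp
    exact ((ContinuousLinearMap.apply ℝ ℝ
      (((0 : Fin k → ℝ), Pi.single m 1))).contDiff.contDiffAt).comp p
      ((hG p hp).fderiv_right (m := ((⊤ : ℕ∞) : WithTop ℕ∞)) (by exact_mod_cast le_top))
  have hG2'd : DifferentiableAt ℝ G2' (θ, θ) :=
    (hG2' (θ, θ) ⟨hθ, hθ⟩).differentiableAt (by simp)
  have fact4 : ∀ u ∈ Θ, gD D i j u = -G2 (u, u) := by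
    intro u hu
    unfold gD
    rw [fact3 i u hu u hu]
  -- LHS
  have hLHS : pd m (fun u => gD D i j u) θ
      = -(fderiv ℝ G2 (θ, θ) (Pi.single m 1, 0) + fderiv ℝ G2 (θ, θ) (0, Pi.single m 1)) := by
    have hev : (fun u => gD D i j u) =ᶠ[𝓝 θ] (fun u => -G2 (u, u)) := by
      filter_upwards [hΘ.mem_nhds hθ] with u hu using fact4 u hu
    have hd : DifferentiableAt ℝ (fun u : Fin k → ℝ => G2 (u, u)) θ := by
      have h1 : HasFDerivAt (fun x : Fin k → ℝ => (x, x))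
          ((ContinuousLinearMap.id ℝ _).prod (ContinuousLinearMap.id ℝ _)) θ :=
        HasFDerivAt.prodMk (hasFDerivAt_id θ) (hasFDerivAt_id θ)
      exact (HasFDerivAt.comp (f := fun x : Fin k → ℝ => (x, x)) θ hG2d.hasFDerivAt h1).differentiableAt
    calc pd m (fun u => gD D i j u) θ
        = fderiv ℝ (fun u => -G2 (u, u)) θ (Pi.single m 1) := by rw [pd, hev.fderiv_eq]
      _ = -(fderiv ℝ (fun u : Fin k → ℝ => G2 (u, u)) θ (Pi.single m 1)) := by
          rw [fderiv_fun_neg]; simp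
      _ = -(fderiv ℝ G2 (θ, θ) (Pi.single m 1, Pi.single m 1)) := by
          rw [show fderiv ℝ (fun u : Fin k → ℝ => G2 (u, u)) θ (Pi.single m 1)
            = fderiv ℝ G2 (θ, θ) (Pi.single m 1, Pi.single m 1) from pd_diag G2 θ hG2d m]
      _ = -(fderiv ℝ G2 (θ, θ) (Pi.single m 1, 0) + fderiv ℝ G2 (θ, θ) (0, Pi.single m 1)) := by
          rw [← ContinuousLinearMap.map_add]
          congr 1
          simp [Prod.ext_iff]
  have hΓD : ΓD D m i j θ = -(fderiv ℝ G2 (θ, θ) (Pi.single m 1, 0)) := by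
    unfold ΓD
    congr 1
    have hev : (fun u => pd i (fun w => pd j (fun v => D w v) θ) u) =ᶠ[𝓝 θ]
        (fun u => G2 (u, θ)) := by
      filter_upwards [hΘ.mem_nhds hθ] with u hu
      exact fact3 i u hu θ hθ
    rw [pd, hev.fderiv_eq]
    exact pd_left G2 θ θ hG2d m
  have hΓDs : ΓDstar D m j i θ = -(fderiv ℝ G2' (θ, θ) (Pi.single i 1, 0)) := by
    unfold ΓDstar
    congr 1
    have hev : (fun u => pd m (fun v => pd j (fun w => D u w) v) θ) =ᶠ[𝓝 θ]
        (fun u => G2' (u, θ)) := by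
      filter_upwards [hΘ.mem_nhds hθ] with u hu
      exact fact3' m u hu θ hθ
    rw [pd, hev.fderiv_eq]
    exact pd_left G2' θ θ hG2'd i
  have hsym : fderiv ℝ G2' (θ, θ) (Pi.single i 1, 0) = fderiv ℝ G2 (θ, θ) (0, Pi.single m 1) := by
    have hGev : ∀ᶠ p in 𝓝 ((θ, θ) : (Fin k → ℝ) × (Fin k → ℝ)), ContDiffAt ℝ (⊤ : ℕ∞) G p := by
      filter_upwards [hU.mem_nhds ⟨hθ, hθ⟩] with p hp using hG p hp
    exact sym_second G (θ, θ) hGev ((0 : Fin k → ℝ), Pi.single m 1) (Pi.single i 1, 0)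
  rw [hLHS, hΓD, hΓDs, hsym]
  ring
end

section
/- Let X be a nonempty finite set, p a positive probability mass function on X, and A : X → ℝ. Let B_1, …, B_m : X → ℝ satisfy E_p[B_i] = 0 for all i, and suppose the Gram matrix G with entries G_{i,j} = E_p[B_i·B_j] is invertible. Let v ∈ ℝ^m have entries v_i = E_p[A·B_i]. Then Var_p(A) ≥ vᵀ G^{-1} v, with equality if and only if the function A − E_p[A] (the constant E_p[A] subtracted from A) lies in the linear span of {B_1, …, B_m}. -/
/-- Expectation of `A` under the probability mass function `p` on a finite set. -/
noncomputable def Ep {X : Type*} [Fintype X] (p A : X → ℝ) : ℝ := ∑ x, p x * A x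

/-- Variance of `A` under the probability mass function `p` on a finite set. -/
noncomputable def Varp {X : Type*} [Fintype X] (p A : X → ℝ) : ℝ :=
  ∑ x, p x * (A x - Ep p A) ^ 2

/-!
Least squares in `L²(p)`. Since the `Bᵢ` are centered, `vᵢ = E_p[f Bᵢ]` for `f = A - E_p[A]`,
and for any coefficients `c` expanding the square gives
`E_p[(f - ∑ cᵢ Bᵢ)²] = Var_p(A) - 2 c ⬝ v + c ⬝ G c`. At the normal-equation solution
`c = G⁻¹ v` this is `Var_p(A) - vᵀ G⁻¹ v`, which is therefore nonnegative, and since `p > 0`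
it vanishes exactly when `f = ∑ cᵢ Bᵢ`. Conversely, if `f = ∑ cᵢ Bᵢ` then taking inner
products with the `Bⱼ` gives `G c = v`, so `c` is the normal-equation solution.
-/

open Matrix

section Weighted

variable {X ι : Type*} [Fintype X]

theorem Ep_eq_dotProduct (p A : X → ℝ) : Ep p A = p ⬝ᵥ A := rfl

theorem Ep_mul_lincomb [Fintype ι] (p g : X → ℝ) (B : ι → X → ℝ) (c : ι → ℝ) :
    Ep p (g * ∑ i, c i • B i) = c ⬝ᵥ fun i => Ep p (g * B i) := by
  simp only [Ep, dotProduct, Finset.sum_apply, Pi.mul_apply, Pi.smul_apply, smul_eq_mul,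
    Finset.mul_sum]
  rw [Finset.sum_comm]
  exact Finset.sum_congr rfl fun i _ => Finset.sum_congr rfl fun x _ => by ring

theorem Ep_sq_nonneg {p : X → ℝ} (hp : ∀ x, 0 < p x) (g : X → ℝ) : 0 ≤ Ep p (g ^ 2) :=
  Finset.sum_nonneg fun x _ => mul_nonneg (hp x).le (sq_nonneg (g x))

theorem Ep_sq_eq_zero_iff {p : X → ℝ} (hp : ∀ x, 0 < p x) (g : X → ℝ) :
    Ep p (g ^ 2) = 0 ↔ g = 0 := by
  simp only [Ep, Pi.pow_apply]
  rw [Finset.sum_eq_zero_iff_of_nonneg fun x _ => mul_nonneg (hp x).le (sq_nonneg (g x))]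
  simp [funext_iff, (hp _).ne']

theorem Ep_centered_mul {p B : X → ℝ} (hB : Ep p B = 0) (A : X → ℝ) :
    Ep p ((fun x => A x - Ep p A) * B) = Ep p (A * B) := by
  have h : ∀ x, p x * ((A x - Ep p A) * B x) = p x * (A x * B x) - Ep p A * (p x * B x) :=
    fun x => by ring
  change ∑ x, p x * ((A x - Ep p A) * B x) = ∑ x, p x * (A x * B x)
  rw [Finset.sum_congr rfl fun x _ => h x, Finset.sum_sub_distrib, ← Finset.mul_sum]
  rw [show ∑ x, p x * B x = 0 from hB, mul_zero, sub_zero]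

theorem Varp_eq_Ep_sq (p A : X → ℝ) : Varp p A = Ep p ((fun x => A x - Ep p A) ^ 2) := rfl

noncomputable def gramMatrix (p : X → ℝ) (B : ι → X → ℝ) : Matrix ι ι ℝ :=
  Matrix.of fun i j => Ep p (B i * B j)

theorem gramMatrix_mulVec [Fintype ι] (p : X → ℝ) (B : ι → X → ℝ) (c : ι → ℝ) :
    gramMatrix p B *ᵥ c = fun j => Ep p ((∑ i, c i • B i) * B j) := by
  ext j
  rw [mul_comm (∑ i, c i • B i), Ep_mul_lincomb, dotProduct_comm]
  rfl

theorem Ep_sq_sub_lincomb [Fintype ι] (p f : X → ℝ) (B : ι → X → ℝ) (c : ι → ℝ) :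
    Ep p ((f - ∑ i, c i • B i) ^ 2)
      = Ep p (f ^ 2) - 2 * (c ⬝ᵥ fun i => Ep p (f * B i)) + c ⬝ᵥ (gramMatrix p B *ᵥ c) := by
  set S := ∑ i, c i • B i
  have hexp : (f - S) ^ 2 = f ^ 2 - (2 : ℝ) • (f * S) + S * S := by
    ext x
    simp only [Pi.sub_apply, Pi.add_apply, Pi.pow_apply, Pi.mul_apply, Pi.smul_apply, smul_eq_mul]
    ring
  rw [hexp, gramMatrix_mulVec, Ep_eq_dotProduct, dotProduct_add, dotProduct_sub, dotProduct_smul,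
    smul_eq_mul, ← Ep_eq_dotProduct, ← Ep_eq_dotProduct, ← Ep_eq_dotProduct, Ep_mul_lincomb,
    Ep_mul_lincomb]

end Weighted

theorem stmt_4_general {X : Type*} [Fintype X]
    (p : X → ℝ) (hp : ∀ x, 0 < p x)
    (A : X → ℝ) (m : ℕ) (B : Fin m → X → ℝ) (hB : ∀ i, Ep p (B i) = 0)
    (G : Matrix (Fin m) (Fin m) ℝ)
    (hG : ∀ i j, G i j = Ep p (fun x => B i x * B j x))
    (hGinv : IsUnit G.det)
    (v : Fin m → ℝ) (hv : ∀ i, v i = Ep p (fun x => A x * B i x)) :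
    dotProduct v (G⁻¹.mulVec v) ≤ Varp p A ∧
    (Varp p A = dotProduct v (G⁻¹.mulVec v) ↔
      (fun x => A x - Ep p A) ∈ Submodule.span ℝ (Set.range B)) := by
  set f : X → ℝ := fun x => A x - Ep p A
  set w := G⁻¹ *ᵥ v with hwdef
  have hGram : G = gramMatrix p B := Matrix.ext hG
  have hvf : v = fun i => Ep p (f * B i) := funext fun i => by rw [hv, Ep_centered_mul (hB i)]; rfl
  have hw : G *ᵥ w = v := by rw [mulVec_mulVec, mul_nonsing_inv _ hGinv, one_mulVec]
  have hres : Ep p ((f - ∑ i, w i • B i) ^ 2) = Varp p A - v ⬝ᵥ w := by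
    rw [Ep_sq_sub_lincomb, ← hGram, hw, ← hvf, Varp_eq_Ep_sq, dotProduct_comm]
    ring
  refine ⟨by linarith [Ep_sq_nonneg hp (f - ∑ i, w i • B i)], ?_⟩
  rw [Submodule.mem_span_range_iff_exists_fun]
  calc Varp p A = v ⬝ᵥ w ↔ f = ∑ i, w i • B i := by
        rw [← sub_eq_zero, ← hres, Ep_sq_eq_zero_iff hp, sub_eq_zero]
    _ ↔ ∃ c : Fin m → ℝ, ∑ i, c i • B i = f := by
        refine ⟨fun h => ⟨w, h.symm⟩, fun ⟨c, hc⟩ => ?_⟩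
        have hGc : G *ᵥ c = v := by rw [hGram, gramMatrix_mulVec, hc, hvf]
        have hcw : w = c := by rw [hwdef, ← hGc, mulVec_mulVec, nonsing_inv_mul _ hGinv, one_mulVec]
        rw [← hc, hcw]

/-- if `B_1, …, B_m` are centered under `p` with invertible Gram matrix
`G_{i,j} = E_p[B_i B_j]` and `v_i = E_p[A·B_i]`, then `Var_p(A) ≥ vᵀ G⁻¹ v`, with
equality iff `A − E_p[A]` lies in the span of the `B_i`. -/
theorem stmt_4 {X : Type*} [Fintype X] [Nonempty X]
    (p : X → ℝ) (hp : ∀ x, 0 < p x) (hsum : ∑ x, p x = 1)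
    (A : X → ℝ) (m : ℕ) (B : Fin m → X → ℝ) (hB : ∀ i, Ep p (B i) = 0)
    (G : Matrix (Fin m) (Fin m) ℝ)
    (hG : ∀ i j, G i j = Ep p (fun x => B i x * B j x))
    (hGinv : IsUnit G.det)
    (v : Fin m → ℝ) (hv : ∀ i, v i = Ep p (fun x => A x * B i x)) :
    dotProduct v (G⁻¹.mulVec v) ≤ Varp p A ∧
    (Varp p A = dotProduct v (G⁻¹.mulVec v) ↔
      (fun x => A x - Ep p A) ∈ Submodule.span ℝ (Set.range B)) :=
  stmt_4_general p hp A m B hB G hG hGinv v hv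
end

section
/- (Deterministic Cramér–Rao lower bound, unbiased vector case.) Let Θ be an open subset of ℝ^k and {p_θ : θ ∈ Θ} a smooth family of positive probability mass functions on a nonempty finite set X, with Fisher information matrix G^{(e)}(θ) invertible for all θ. If θ̂ : X → ℝ^k is an unbiased estimator of θ (E_{p_θ}[θ̂] = θ for all θ ∈ Θ), then for every θ ∈ Θ: Cov_θ(θ̂) ⪰ (G^{(e)}(θ))^{-1}, where ⪰ denotes the positive semidefinite (Loewner) order. -/
/-- Fisher information matrix `G^{(e)}(θ)_{i,j} = Σ_x p_θ(x) ∂_i log p_θ(x) ∂_j log p_θ(x)`. -/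
noncomputable def fisher {k : ℕ} {X : Type*} [Fintype X]
    (p : (Fin k → ℝ) → X → ℝ) (θ : Fin k → ℝ) : Matrix (Fin k) (Fin k) ℝ :=
  Matrix.of fun i j => ∑ x, p θ x *
    (pd i (fun u => Real.log (p u x)) θ * pd j (fun u => Real.log (p u x)) θ)

/-- Covariance matrix of the estimator `est` at `θ`. -/
noncomputable def covM {k : ℕ} {X : Type*} [Fintype X]
    (p : (Fin k → ℝ) → X → ℝ) (est : X → Fin k → ℝ) (θ : Fin k → ℝ) :
    Matrix (Fin k) (Fin k) ℝ :=
  Matrix.of fun i j => ∑ x, p θ x * ((est x i - θ i) * (est x j - θ j))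

open Matrix in
lemma sum_swap_Q {k : ℕ} {X : Type*} [Fintype X]
    (a b : Fin k → ℝ) (c : X → ℝ) (f g : Fin k → X → ℝ) :
    ∑ i, ∑ j, a i * b j * (∑ x, c x * (f i x * g j x)) =
      ∑ x, c x * ((∑ i, a i * f i x) * (∑ j, b j * g j x)) := by
  calc ∑ i, ∑ j, a i * b j * (∑ x, c x * (f i x * g j x))
      = ∑ i, ∑ j, ∑ x, a i * b j * (c x * (f i x * g j x)) := by
        simp only [Finset.mul_sum]
    _ = ∑ i, ∑ x, ∑ j, a i * b j * (c x * (f i x * g j x)) :=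
        Finset.sum_congr rfl fun i _ => Finset.sum_comm
    _ = ∑ x, ∑ i, ∑ j, a i * b j * (c x * (f i x * g j x)) :=
        Finset.sum_comm
    _ = ∑ x, c x * ((∑ i, a i * f i x) * (∑ j, b j * g j x)) := by
        refine Finset.sum_congr rfl fun x _ => ?_
        rw [Finset.sum_mul_sum, Finset.mul_sum]
        refine (Finset.sum_congr rfl fun i _ => ?_).symm
        rw [Finset.mul_sum]
        exact Finset.sum_congr rfl fun j _ => by ring

open Matrix in
lemma expand_quad {k : ℕ} (M : Matrix (Fin k) (Fin k) ℝ) (a b : Fin k → ℝ) :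
    a ⬝ᵥ M.mulVec b = ∑ i, ∑ j, a i * b j * M i j := by
  simp only [dotProduct, Matrix.mulVec, Finset.mul_sum]
  exact Finset.sum_congr rfl fun i _ => Finset.sum_congr rfl fun j _ => by ring

open Matrix in
/-- deterministic Cramér–Rao lower bound, unbiased vector case:
for an unbiased estimator `θ̂`, `Cov_θ(θ̂) ⪰ (G^{(e)}(θ))⁻¹` in the Loewner order. -/
theorem stmt_7 {k : ℕ} {X : Type*} [Fintype X] [Nonempty X]
    (Θ : Set (Fin k → ℝ)) (hΘ : IsOpen Θ)
    (p : (Fin k → ℝ) → X → ℝ)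
    (hpos : ∀ θ ∈ Θ, ∀ x, 0 < p θ x)
    (hsum : ∀ θ ∈ Θ, (∑ x, p θ x) = 1)
    (hsmooth : ∀ x, ContDiffOn ℝ (⊤ : ℕ∞) (fun θ => p θ x) Θ)
    (hfisherinv : ∀ θ ∈ Θ, IsUnit (fisher p θ).det)
    (est : X → Fin k → ℝ)
    (hunbiased : ∀ θ ∈ Θ, ∀ i, (∑ x, p θ x * est x i) = θ i) :
    ∀ θ ∈ Θ, (covM p est θ - (fisher p θ)⁻¹).PosSemidef := by
  intro θ hθ
  set G := fisher p θ with hG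
  set Ginv := (fisher p θ)⁻¹ with hGinvdef
  -- basic objects
  set s : Fin k → X → ℝ := fun j x => pd j (fun u => Real.log (p u x)) θ with hsdef
  set dp : Fin k → X → ℝ :=
    fun j x => fderiv ℝ (fun u => p u x) θ (Pi.single j 1) with hdpdef
  have hnhds : Θ ∈ nhds θ := hΘ.mem_nhds hθ
  have hdiff : ∀ x, DifferentiableAt ℝ (fun u => p u x) θ := fun x =>
    ((hsmooth x).contDiffAt hnhds).differentiableAt (by simp)
  have hps : ∀ j x, p θ x * s j x = dp j x := by
    intro j x
    have h2 : HasFDerivAt (fun u => Real.log (p u x))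
        ((p θ x)⁻¹ • fderiv ℝ (fun u => p u x) θ) θ :=
      (hdiff x).hasFDerivAt.log (hpos θ hθ x).ne'
    have : s j x = (p θ x)⁻¹ * dp j x := by
      show fderiv ℝ (fun u => Real.log (p u x)) θ (Pi.single j 1) = _
      rw [h2.fderiv]; rfl
    rw [this, ← mul_assoc, mul_inv_cancel₀ (hpos θ hθ x).ne', one_mul]
  -- derivative of total mass is zero
  have key1 : ∀ j, ∑ x, dp j x = 0 := by
    intro j
    have hF : HasFDerivAt (fun u => ∑ x, p u x)
        (∑ x, fderiv ℝ (fun u => p u x) θ) θ :=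
      HasFDerivAt.fun_sum (fun x _ => (hdiff x).hasFDerivAt)
    have heq : (fun u => ∑ x, p u x) =ᶠ[nhds θ] fun _ => (1 : ℝ) := by
      filter_upwards [hnhds] with u hu using hsum u hu
    have h0 : fderiv ℝ (fun u => ∑ x, p u x) θ = 0 := by
      rw [heq.fderiv_eq]; exact fderiv_const_apply 1
    have := hF.fderiv
    rw [h0] at this
    calc ∑ x, dp j x = (∑ x, fderiv ℝ (fun u => p u x) θ) (Pi.single j 1) := by
          rw [ContinuousLinearMap.sum_apply]
      _ = 0 := by rw [← this]; rfl
  -- derivative of unbiasedness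
  have key2 : ∀ i j, ∑ x, est x i * dp j x = (Pi.single j (1 : ℝ) : Fin k → ℝ) i := by
    intro i j
    have hF : HasFDerivAt (fun u => ∑ x, p u x * est x i)
        (∑ x, est x i • fderiv ℝ (fun u => p u x) θ) θ :=
      HasFDerivAt.fun_sum (fun x _ => by
        simpa using (hdiff x).hasFDerivAt.mul_const (est x i))
    have heq : (fun u => ∑ x, p u x * est x i) =ᶠ[nhds θ] fun u => u i := by
      filter_upwards [hnhds] with u hu using hunbiased u hu i
    have hproj : HasFDerivAt (fun u : Fin k → ℝ => u i)
        (ContinuousLinearMap.proj i : (Fin k → ℝ) →L[ℝ] ℝ) θ :=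
      (ContinuousLinearMap.proj (R := ℝ) (φ := fun _ : Fin k => ℝ) i).hasFDerivAt (x := θ)
    have h0 : fderiv ℝ (fun u => ∑ x, p u x * est x i) θ =
        (ContinuousLinearMap.proj i : (Fin k → ℝ) →L[ℝ] ℝ) := by
      rw [heq.fderiv_eq]; exact hproj.fderiv
    have := hF.fderiv
    rw [h0] at this
    calc ∑ x, est x i * dp j x
        = (∑ x, est x i • fderiv ℝ (fun u => p u x) θ) (Pi.single j 1) := by
          rw [ContinuousLinearMap.sum_apply]
          exact Finset.sum_congr rfl fun x _ => by
            rw [ContinuousLinearMap.smul_apply]; rfl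
      _ = (ContinuousLinearMap.proj i : (Fin k → ℝ) →L[ℝ] ℝ) (Pi.single j 1) := by
          rw [this]
      _ = (Pi.single j (1 : ℝ) : Fin k → ℝ) i := rfl
  -- correlation between estimator and score
  have hE : ∀ i j, ∑ x, p θ x * ((est x i - θ i) * s j x) = (Pi.single j (1 : ℝ) : Fin k → ℝ) i := by
    intro i j
    have hterm : ∀ x, p θ x * ((est x i - θ i) * s j x)
        = est x i * dp j x - θ i * dp j x := by
      intro x
      linear_combination (est x i - θ i) * hps j x
    rw [Finset.sum_congr rfl fun x _ => hterm x, Finset.sum_sub_distrib,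
      key2 i j, ← Finset.mul_sum, key1 j, mul_zero, sub_zero]
  -- fisher entries
  have hGent : ∀ i j, G i j = ∑ x, p θ x * (s i x * s j x) := fun i j => rfl
  have hCent : ∀ i j, covM p est θ i j
      = ∑ x, p θ x * ((est x i - θ i) * (est x j - θ j)) := fun i j => rfl
  -- symmetry
  have hGsymm : Gᵀ = G := by
    ext i j
    rw [Matrix.transpose_apply, hGent j i, hGent i j]
    exact Finset.sum_congr rfl fun x _ => by ring
  have hGinvsymm : Ginvᵀ = Ginv := by
    rw [hGinvdef, Matrix.transpose_nonsing_inv, ← hG, hGsymm]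
  have hCsymm : (covM p est θ)ᵀ = covM p est θ := by
    ext i j
    rw [Matrix.transpose_apply, hCent j i, hCent i j]
    exact Finset.sum_congr rfl fun x _ => by ring
  rw [Matrix.posSemidef_iff_dotProduct_mulVec]
  constructor
  · show (covM p est θ - Ginv)ᴴ = _
    rw [Matrix.conjTranspose_sub]
    have h1 : (covM p est θ)ᴴ = (covM p est θ)ᵀ := Matrix.conjTranspose_eq_transpose_of_trivial _
    have h2 : Ginvᴴ = Ginvᵀ := Matrix.conjTranspose_eq_transpose_of_trivial _
    rw [h1, h2, hCsymm, hGinvsymm]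
  · intro v
    set w : Fin k → ℝ := Ginv.mulVec v with hwdef
    set A : X → ℝ := fun x => ∑ i, v i * (est x i - θ i) with hAdef
    set B : X → ℝ := fun x => ∑ i, w i * s i x with hBdef
    have hA : v ⬝ᵥ (covM p est θ).mulVec v = ∑ x, p θ x * (A x * A x) := by
      rw [expand_quad]
      rw [Finset.sum_congr rfl fun i _ => Finset.sum_congr rfl fun j _ => by
        rw [hCent i j]]
      exact sum_swap_Q v v (fun x => p θ x) (fun i x => est x i - θ i)
        (fun j x => est x j - θ j)
    have hGw : G.mulVec w = v := by
      rw [hwdef, Matrix.mulVec_mulVec, hG, hGinvdef,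
        Matrix.mul_nonsing_inv _ (hfisherinv θ hθ), Matrix.one_mulVec]
    have hB : v ⬝ᵥ Ginv.mulVec v = ∑ x, p θ x * (A x * B x) := by
      have h1 : ∑ x, p θ x * (A x * B x)
          = ∑ i, ∑ j, v i * w j * (∑ x, p θ x * ((est x i - θ i) * s j x)) :=
        (sum_swap_Q v w (fun x => p θ x) (fun i x => est x i - θ i) s).symm
      rw [h1]
      rw [Finset.sum_congr rfl fun i _ => Finset.sum_congr rfl fun j _ => by
        rw [hE i j]]
      have h2 : ∀ i, ∑ j, v i * w j * (Pi.single j (1 : ℝ) : Fin k → ℝ) i = v i * w i := by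
        intro i
        rw [Finset.sum_congr rfl fun j _ => by
          rw [Pi.single_apply]]
        simp [mul_ite]
      rw [Finset.sum_congr rfl fun i _ => h2 i]
      rfl
    have hC : v ⬝ᵥ Ginv.mulVec v = ∑ x, p θ x * (B x * B x) := by
      have h1 : ∑ x, p θ x * (B x * B x)
          = ∑ i, ∑ j, w i * w j * G i j := by
        rw [Finset.sum_congr rfl fun i _ => Finset.sum_congr rfl fun j _ => by
          rw [hGent i j]]
        exact (sum_swap_Q w w (fun x => p θ x) s s).symm
      rw [h1, ← expand_quad, hGw, dotProduct_comm]
    have hexp : star v ⬝ᵥ (covM p est θ - Ginv).mulVec v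
        = ∑ x, p θ x * (A x - B x) ^ 2 := by
      have hterm : ∀ x, p θ x * (A x - B x) ^ 2
          = p θ x * (A x * A x) - 2 * (p θ x * (A x * B x)) + p θ x * (B x * B x) := by
        intro x; ring
      rw [star_trivial, Matrix.sub_mulVec, dotProduct_sub, hA]
      rw [Finset.sum_congr rfl fun x _ => hterm x, Finset.sum_add_distrib,
        Finset.sum_sub_distrib, ← Finset.mul_sum, ← hB, ← hC]
      ring
    rw [hexp]
    exact Finset.sum_nonneg fun x _ => mul_nonneg (hpos θ hθ x).le (sq_nonneg _)
end

section
/- (Barankin bound, scalar case.) Let Θ be an open subset of ℝ and {p_θ : θ ∈ Θ} a family of positive probability mass functions on a nonempty finite set X. Let θ̂ : X → ℝ be an unbiased estimator of θ (E_{p_θ}[θ̂] = θ for all θ ∈ Θ). Then for every θ ∈ Θ, every n ∈ ℕ, every a_1, …, a_n ∈ ℝ, and every θ^{(1)}, …, θ^{(n)} ∈ Θ such that the quantity Σ_{x∈X} [ Σ_{l=1}^n a_l · p_{θ^{(l)}}(x)/p_θ(x) ]² p_θ(x) is strictly positive, one has Var_θ(θ̂) ≥ ( Σ_{l=1}^n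 a_l (θ^{(l)} − θ) )² / ( Σ_{x∈X} [ Σ_{l=1}^n a_l · p_{θ^{(l)}}(x)/p_θ(x) ]² p_θ(x) ). Consequently Var_θ(θ̂) is bounded below by the supremum of the right-hand side over all n, a_1,…,a_n, and θ^{(1)},…,θ^{(n)} ∈ Θ. -/
/-- Barankin bound, scalar case: for an unbiased estimator `θ̂` of a scalar
parameter `θ`, the variance is bounded below by every Barankin quotient
`(Σ_l a_l (θ^{(l)} − θ))² / Σ_x (Σ_l a_l p_{θ^{(l)}}(x)/p_θ(x))² p_θ(x)`, and hence by the
supremum over all `n`, `a_1,…,a_n ∈ ℝ`, and test points `θ^{(1)},…,θ^{(n)} ∈ Θ`. -/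
theorem stmt_9 {X : Type*} [Fintype X] [Nonempty X]
    (Θ : Set ℝ) (hΘ : IsOpen Θ)
    (p : ℝ → X → ℝ)
    (hpos : ∀ θ ∈ Θ, ∀ x, 0 < p θ x)
    (hsum : ∀ θ ∈ Θ, (∑ x, p θ x) = 1)
    (est : X → ℝ)
    (hunbiased : ∀ θ ∈ Θ, (∑ x, p θ x * est x) = θ) :
    ∀ θ ∈ Θ,
      (∀ (n : ℕ) (a : Fin n → ℝ) (t : Fin n → ℝ), (∀ l, t l ∈ Θ) →
        0 < (∑ x, (∑ l, a l * (p (t l) x / p θ x)) ^ 2 * p θ x) →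
        (∑ l, a l * (t l - θ)) ^ 2 / (∑ x, (∑ l, a l * (p (t l) x / p θ x)) ^ 2 * p θ x)
          ≤ ∑ x, p θ x * (est x - θ) ^ 2) ∧
      sSup {r : ℝ | ∃ (n : ℕ) (a : Fin n → ℝ) (t : Fin n → ℝ), (∀ l, t l ∈ Θ) ∧
          0 < (∑ x, (∑ l, a l * (p (t l) x / p θ x)) ^ 2 * p θ x) ∧
          r = (∑ l, a l * (t l - θ)) ^ 2
              / (∑ x, (∑ l, a l * (p (t l) x / p θ x)) ^ 2 * p θ x)}
        ≤ ∑ x, p θ x * (est x - θ) ^ 2 := by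
  intro θ hθ
  have hV : (0:ℝ) ≤ ∑ x, p θ x * (est x - θ) ^ 2 :=
    Finset.sum_nonneg fun x _ => mul_nonneg (hpos θ hθ x).le (sq_nonneg _)
  have key : ∀ (n : ℕ) (a : Fin n → ℝ) (t : Fin n → ℝ), (∀ l, t l ∈ Θ) →
      0 < (∑ x, (∑ l, a l * (p (t l) x / p θ x)) ^ 2 * p θ x) →
      (∑ l, a l * (t l - θ)) ^ 2 / (∑ x, (∑ l, a l * (p (t l) x / p θ x)) ^ 2 * p θ x)
        ≤ ∑ x, p θ x * (est x - θ) ^ 2 := by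
    intro n a t ht hS
    rw [div_le_iff₀ hS]
    have hN : (∑ l, a l * (t l - θ))
        = ∑ x, (∑ l, a l * (p (t l) x / p θ x)) * ((est x - θ) * Real.sqrt (p θ x)
            * Real.sqrt (p θ x)) := by
      have hsq : ∀ x, Real.sqrt (p θ x) * Real.sqrt (p θ x) = p θ x := fun x =>
        Real.mul_self_sqrt (hpos θ hθ x).le
      have : ∀ x, (∑ l, a l * (p (t l) x / p θ x)) * ((est x - θ) * Real.sqrt (p θ x)
            * Real.sqrt (p θ x)) = ∑ l, a l * (p (t l) x * (est x - θ)) := by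
        intro x
        rw [mul_assoc, hsq x, Finset.sum_mul]
        refine Finset.sum_congr rfl fun l _ => ?_
        field_simp [(hpos θ hθ x).ne']
      rw [Finset.sum_congr rfl fun x _ => this x, Finset.sum_comm]
      refine Finset.sum_congr rfl fun l _ => ?_
      rw [← Finset.mul_sum]
      congr 1
      have h1 : ∑ x, p (t l) x * (est x - θ)
          = (∑ x, p (t l) x * est x) - θ * ∑ x, p (t l) x := by
        rw [Finset.mul_sum, ← Finset.sum_sub_distrib]
        exact Finset.sum_congr rfl fun x _ => by ring
      rw [h1, hunbiased (t l) (ht l), hsum (t l) (ht l)]; ring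
    have CS := Finset.sum_mul_sq_le_sq_mul_sq Finset.univ
      (fun x => (∑ l, a l * (p (t l) x / p θ x)) * Real.sqrt (p θ x))
      (fun x => (est x - θ) * Real.sqrt (p θ x))
    have hrw : ∀ x : X,
        ((∑ l, a l * (p (t l) x / p θ x)) * Real.sqrt (p θ x))
          * ((est x - θ) * Real.sqrt (p θ x))
        = (∑ l, a l * (p (t l) x / p θ x)) * ((est x - θ) * Real.sqrt (p θ x)
            * Real.sqrt (p θ x)) := by intro x; ring
    have hf2 : ∀ x : X, ((∑ l, a l * (p (t l) x / p θ x)) * Real.sqrt (p θ x)) ^ 2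
        = (∑ l, a l * (p (t l) x / p θ x)) ^ 2 * p θ x := by
      intro x
      rw [mul_pow, Real.sq_sqrt (hpos θ hθ x).le]
    have hg2 : ∀ x : X, ((est x - θ) * Real.sqrt (p θ x)) ^ 2
        = p θ x * (est x - θ) ^ 2 := by
      intro x
      rw [mul_pow, Real.sq_sqrt (hpos θ hθ x).le]; ring
    simp only [hrw, hf2, hg2] at CS
    rw [hN]
    calc (∑ x, (∑ l, a l * (p (t l) x / p θ x)) * ((est x - θ) * Real.sqrt (p θ x)
            * Real.sqrt (p θ x))) ^ 2
        ≤ (∑ x, (∑ l, a l * (p (t l) x / p θ x)) ^ 2 * p θ x)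
            * ∑ x, p θ x * (est x - θ) ^ 2 := CS
      _ = (∑ x, p θ x * (est x - θ) ^ 2)
            * ∑ x, (∑ l, a l * (p (t l) x / p θ x)) ^ 2 * p θ x := by ring
  refine ⟨key, Real.sSup_le ?_ hV⟩
  rintro r ⟨n, a, t, ht, hS, rfl⟩
  exact key n a t ht hS
end

section
/- (Matrix Jensen inequality for the inverse, used in the proof of the Bayesian Cramér–Rao bound.) Let (Ω, μ) be a probability space and let G : Ω → (k×k real symmetric matrices) be measurable, with G(ω) positive definite for μ-a.e. ω. Assume G and ω ↦ G(ω)^{-1} are both Bochner integrable and that ∫_Ω G dμ is invertible. Then ∫_Ω G(ω)^{-1} dμ(ω) ⪰ ( ∫_Ω G(ω) dμ(ω) )^{-1}, where ⪰ denotes the positive semidefinite (Loewner) order. -/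
open MeasureTheory
open scoped Matrix

/-!
For positive definite `G` and all vectors `x, y`, expanding `0 ≤ (y - G⁻¹x) ⬝ G (y - G⁻¹x)` gives
`x ⬝ G⁻¹ x ≥ 2 x ⬝ y - y ⬝ G y`. Take `y = M⁻¹ x` with `M = ∫ G`, which does not depend on `ω`,
and integrate: `x ⬝ (∫ G⁻¹) x ≥ 2 x ⬝ M⁻¹ x - (M⁻¹ x) ⬝ M (M⁻¹ x) = x ⬝ M⁻¹ x`.
-/

namespace Matrix

variable {m n : Type*} [Fintype m] [Fintype n]

theorem dotProduct_mulVec_eq_sum (u : m → ℝ) (A : Matrix m n ℝ) (v : n → ℝ) :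
    u ⬝ᵥ A *ᵥ v = ∑ i, ∑ j, u i * A i j * v j := by
  simp only [dotProduct, mulVec, Finset.mul_sum, mul_assoc]

theorem PosDef.two_mul_dotProduct_sub_le_dotProduct_inv_mulVec [DecidableEq n]
    {G : Matrix n n ℝ} (hG : G.PosDef) (x y : n → ℝ) :
    2 * (x ⬝ᵥ y) - y ⬝ᵥ G *ᵥ y ≤ x ⬝ᵥ G⁻¹ *ᵥ x := by
  have hGGinv : G *ᵥ (G⁻¹ *ᵥ x) = x := by
    rw [mulVec_mulVec, mul_nonsing_inv _ (isUnit_iff_ne_zero.mpr hG.det_pos.ne'), one_mulVec]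
  have hcross : G⁻¹ *ᵥ x ⬝ᵥ G *ᵥ y = x ⬝ᵥ y := by
    rw [dotProduct_mulVec, ← mulVec_transpose, ← conjTranspose_eq_transpose_of_trivial,
      hG.isHermitian.eq, hGGinv]
  have h := hG.posSemidef.dotProduct_mulVec_nonneg (y - G⁻¹ *ᵥ x)
  rw [star_trivial, mulVec_sub, hGGinv, sub_dotProduct, dotProduct_sub, dotProduct_sub,
    hcross, dotProduct_comm (G⁻¹ *ᵥ x), dotProduct_comm y x] at h
  linarith

theorem dotProduct_inv_mulVec_mulVec_inv_mulVec [DecidableEq n] {A : Matrix n n ℝ}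
    (hA : IsUnit A.det) (x : n → ℝ) :
    A⁻¹ *ᵥ x ⬝ᵥ A *ᵥ A⁻¹ *ᵥ x = x ⬝ᵥ A⁻¹ *ᵥ x := by
  rw [mulVec_mulVec, mul_nonsing_inv _ hA, one_mulVec, dotProduct_comm]

end Matrix

section Integral

variable {m n Ω : Type*} [Fintype m] [Fintype n] [MeasurableSpace Ω] {μ : Measure Ω}
  {F : Ω → Matrix m n ℝ}

theorem integrable_dotProduct_mulVec (hF : ∀ i j, Integrable (fun ω => F ω i j) μ)
    (u : m → ℝ) (v : n → ℝ) : Integrable (fun ω => u ⬝ᵥ F ω *ᵥ v) μ := by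
  simp only [Matrix.dotProduct_mulVec_eq_sum]
  exact integrable_finsetSum _ fun i _ => integrable_finsetSum _ fun j _ =>
    ((hF i j).const_mul _).mul_const _

theorem integral_dotProduct_mulVec (hF : ∀ i j, Integrable (fun ω => F ω i j) μ)
    (u : m → ℝ) (v : n → ℝ) :
    ∫ ω, u ⬝ᵥ F ω *ᵥ v ∂μ = u ⬝ᵥ (Matrix.of fun i j => ∫ ω, F ω i j ∂μ) *ᵥ v := by
  simp only [Matrix.dotProduct_mulVec_eq_sum, Matrix.of_apply]
  rw [integral_finsetSum _ fun i _ => integrable_finsetSum _ fun j _ =>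
    ((hF i j).const_mul _).mul_const _]
  refine Finset.sum_congr rfl fun i _ => ?_
  rw [integral_finsetSum _ fun j _ => ((hF i j).const_mul _).mul_const _]
  simp only [integral_mul_const, integral_const_mul]

omit [Fintype n] in
theorem isHermitian_integral {F : Ω → Matrix n n ℝ} (hF : ∀ᵐ ω ∂μ, (F ω).IsHermitian) :
    (Matrix.of fun i j => ∫ ω, F ω i j ∂μ).IsHermitian := by
  ext i j
  refine integral_congr_ae (hF.mono fun ω hω => ?_)
  simpa using congrFun (congrFun hω i) j

end Integral

theorem stmt_10_general {k : ℕ} {Ω : Type*} [MeasurableSpace Ω]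
    (μ : Measure Ω) [IsProbabilityMeasure μ]
    (G : Ω → Matrix (Fin k) (Fin k) ℝ)
    (hpd : ∀ᵐ ω ∂μ, (G ω).PosDef)
    (hint : ∀ i j, Integrable (fun ω => G ω i j) μ)
    (hintinv : ∀ i j, Integrable (fun ω => (G ω)⁻¹ i j) μ)
    (hinv : IsUnit (Matrix.of fun i j => ∫ ω, G ω i j ∂μ).det) :
    ((Matrix.of fun i j => ∫ ω, (G ω)⁻¹ i j ∂μ)
      - (Matrix.of fun i j => ∫ ω, G ω i j ∂μ)⁻¹).PosSemidef := by
  set M := Matrix.of fun i j => ∫ ω, G ω i j ∂μ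
  have hM : M.IsHermitian := isHermitian_integral (hpd.mono fun _ hω => hω.isHermitian)
  have hN : (Matrix.of fun i j => ∫ ω, (G ω)⁻¹ i j ∂μ).IsHermitian :=
    isHermitian_integral (hpd.mono fun _ hω => hω.isHermitian.inv)
  refine .of_dotProduct_mulVec_nonneg (hN.sub hM.inv) fun x => ?_
  have hmean : ∫ ω, (2 * (x ⬝ᵥ M⁻¹ *ᵥ x) - M⁻¹ *ᵥ x ⬝ᵥ G ω *ᵥ M⁻¹ *ᵥ x) ∂μ
      ≤ ∫ ω, x ⬝ᵥ (G ω)⁻¹ *ᵥ x ∂μ :=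
    integral_mono_ae ((integrable_const _).sub (integrable_dotProduct_mulVec hint _ _))
      (integrable_dotProduct_mulVec hintinv x x) (hpd.mono fun _ hω =>
        hω.two_mul_dotProduct_sub_le_dotProduct_inv_mulVec x (M⁻¹ *ᵥ x))
  rw [integral_sub (integrable_const _) (integrable_dotProduct_mulVec hint _ _),
    integral_const, probReal_univ, one_smul, integral_dotProduct_mulVec hint,
    integral_dotProduct_mulVec hintinv, Matrix.dotProduct_inv_mulVec_mulVec_inv_mulVec hinv]
    at hmean
  rw [star_trivial, Matrix.sub_mulVec, dotProduct_sub]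
  linarith

/-- matrix Jensen inequality for the inverse: if `G` is an a.e. positive
definite symmetric-matrix-valued map on a probability space, integrable entrywise together
with its pointwise inverse, and the mean of `G` is invertible, then
`∫ G⁻¹ dμ ⪰ (∫ G dμ)⁻¹` in the Loewner order. -/
theorem stmt_10 {k : ℕ} {Ω : Type*} [MeasurableSpace Ω]
    (μ : Measure Ω) [IsProbabilityMeasure μ]
    (G : Ω → Matrix (Fin k) (Fin k) ℝ)
    (hsymm : ∀ ω, (G ω).IsSymm)
    (hmeas : ∀ i j, Measurable fun ω => G ω i j)
    (hpd : ∀ᵐ ω ∂μ, (G ω).PosDef)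
    (hint : ∀ i j, Integrable (fun ω => G ω i j) μ)
    (hintinv : ∀ i j, Integrable (fun ω => (G ω)⁻¹ i j) μ)
    (hinv : IsUnit (Matrix.of fun i j => ∫ ω, G ω i j ∂μ).det) :
    ((Matrix.of fun i j => ∫ ω, (G ω)⁻¹ i j ∂μ)
      - (Matrix.of fun i j => ∫ ω, G ω i j ∂μ)⁻¹).PosSemidef :=
  stmt_10_general μ G hpd hint hintinv hinv
end
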